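/- The map φ : N → D(t) defined by φ(s,p) = p.L(s), from the nodes of the evaluation tree ET_M(t) to the positions of t, is a bijection. Consequently ET_M(t) is a finite tree and the evaluation of t inspects every position of t exactly once. -/

import Mathlib

/-- A position is a finite list of positive natural numbers. -/
abbrev Pos : Type := List ℕ+

/-- `below p q` (written `p ≤ q` in the paper) holds iff `q` is a prefix of `p`. -/
def below (p q : Pos) : Prop := ∃ q'' : Pos, p = q ++ q''

/-- Terms over a signature `F`, with a single variable `ω` (patterns are linear). -/
inductive Tm (F : Type) : Type
  | var : Tm F
  | app : F → List (Tm F) → Tm F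

/-- Head symbol of a term (none for the variable). -/
def hd : Tm F → Option F
  | .var => none
  | .app f _ => some f

/-- The subterm of `t` at position `p`, if `p` is in the domain of `t`. -/
def subtermAt : Tm F → Pos → Option (Tm F)
  | t, [] => some t
  | .var, _ :: _ => none
  | .app _ ts, i :: p => (ts[(i : ℕ) - 1]?).bind (fun u => subtermAt u p)

/-- The domain (set of positions) of a term. -/
def Dom (t : Tm F) : Set Pos := {p | (subtermAt t p).isSome}

/-- `t` is a closed term: it contains no variable. -/
def Closed (t : Tm F) : Prop := ∀ p u, subtermAt t p = some u → u ≠ Tm.var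

/-- Terms that respect the arity function of the signature. -/
inductive WF (ar : F → ℕ) : Tm F → Prop
  | var : WF ar Tm.var
  | app : ∀ f ts, ts.length = ar f → (∀ u ∈ ts, WF ar u) → WF ar (Tm.app f ts)

/-- Pattern `ℓ` matches term `t` at position `p`: for every non-variable
position `p'` of `ℓ`, the head symbols of `t[p.p']` and `ℓ[p']` agree. -/
def Matches (ℓ t : Tm F) (p : Pos) : Prop :=
  ∀ p' u, subtermAt ℓ p' = some u → u ≠ Tm.var →
    ∃ v, subtermAt t (p ++ p') = some v ∧ hd v = hd u

/-- A match obligation: a set of (subpattern, position) pairs. -/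
abbrev Obl (F : Type) := Set (Tm F × Pos)
/-- A match goal: a match obligation together with a match announcement. -/
abbrev Goal (F : Type) := Obl F × (Tm F × Pos)
/-- A state of the set automaton: a set of match goals. -/
abbrev St (F : Type) := Set (Goal F)

/-- The positions of a match obligation. -/
def posOf (mo : Obl F) : Set Pos := {p | ∃ u, (u, p) ∈ mo}

/-- All match obligation positions of a state. -/
def posMO (s : St F) : Set Pos := {p | ∃ g ∈ s, p ∈ posOf g.1}

/-- Reduction of a match obligation after observing a symbol of arity `n`
at position `p`: pairs at other positions are kept, and the pair at `p` is
replaced by obligations for its non-variable arguments. -/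
def reduce (mo : Obl F) (n : ℕ) (p : Pos) : Obl F :=
  {x | x ∈ mo ∧ x.2 ≠ p} ∪
  {x | ∃ (ℓ u : Tm F) (i : ℕ+), (ℓ, p) ∈ mo ∧ (i : ℕ) ≤ n ∧
        subtermAt ℓ [i] = some u ∧ u ≠ Tm.var ∧ x = (u, p ++ [i])}

/-- The `f`-derivative of state `s` labelled with position `lab`:
unchanged goals, reduced goals and fresh goals. -/
def derivS (pats : Set (Tm F)) (ar : F → ℕ) (s : St F) (lab : Pos) (f : F) : St F :=
  {g | g ∈ s ∧ lab ∉ posOf g.1} ∪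
  {g | ∃ mo ma, (mo, ma) ∈ s ∧ (∃ ℓ, (ℓ, lab) ∈ mo ∧ hd ℓ = some f) ∧
        reduce mo (ar f) lab ≠ ∅ ∧ g = (reduce mo (ar f) lab, ma)} ∪
  {g | ∃ (ℓ : Tm F) (i : ℕ+), ℓ ∈ pats ∧ (i : ℕ) ≤ ar f ∧
        g = ({(ℓ, lab ++ [i])}, (ℓ, lab ++ [i]))}

/-- The direct dependency relation: the obligation position sets intersect. -/
def dirDep (g₁ g₂ : Goal F) : Prop := (posOf g₁.1 ∩ posOf g₂.1).Nonempty

/-- `K` is an equivalence class of `X` under the transitive closure of the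
direct dependency relation restricted to `X`. -/
def IsClass (X K : St F) : Prop :=
  ∃ g ∈ X, K = {g' | g' ∈ X ∧
    Relation.ReflTransGen (fun a b => a ∈ X ∧ b ∈ X ∧ dirDep a b) g g'}

/-- The match announcement positions of a set of goals. -/
def posMA (K : St F) : Set Pos := {p | ∃ mo ℓ, (mo, (ℓ, p)) ∈ K}

/-- `g` is the greatest common prefix (join) of the set of positions `P`. -/
def IsGcp (P : Set Pos) (g : Pos) : Prop :=
  (∀ p ∈ P, below p g) ∧ ∀ r : Pos, (∀ p ∈ P, below p r) → below g r

/-- Lift a match goal by stripping the common prefix `g` from all positions. -/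
def liftGoal (g : Pos) (x : Goal F) : Goal F :=
  ((fun y : Tm F × Pos => (y.1, y.2.drop g.length)) '' x.1,
   (x.2.1, x.2.2.drop g.length))

/-- Lift a set of match goals. -/
def liftSt (g : Pos) (K : St F) : St F := liftGoal g '' K

/-- The transition function of the set automaton: `(s', p') ∈ delta pats ar L s f`
iff `s'` is the lifting of a dependency class `K` of the derivative and `p'` is
the greatest common prefix of the announcement positions of `K`. -/
def delta (pats : Set (Tm F)) (ar : F → ℕ) (L : St F → Pos) (s : St F) (f : F) :
    Set (St F × Pos) :=
  {x | ∃ K, IsClass (derivS pats ar s (L s) f) K ∧ IsGcp (posMA K) x.2 ∧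
        x.1 = liftSt x.2 K}

/-- The initial state: all fresh root goals. -/
def initSt (pats : Set (Tm F)) : St F :=
  {g | ∃ ℓ ∈ pats, g = ({(ℓ, ([] : Pos))}, (ℓ, ([] : Pos)))}

/-- Reachable states of the set automaton. -/
inductive Reachable (pats : Set (Tm F)) (ar : F → ℕ) (L : St F → Pos) : St F → Prop
  | init : Reachable pats ar L (initSt pats)
  | step : ∀ s f s' p, Reachable pats ar L s →
      (s', p) ∈ delta pats ar L s f → Reachable pats ar L s'

/-- The labelling function `L` picks, for every reachable state, an obligation
position of one of its root goals. -/
def RootLabel (pats : Set (Tm F)) (ar : F → ℕ) (L : St F → Pos) : Prop :=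
  ∀ s, Reachable pats ar L s →
    ∃ mo ℓ, (mo, (ℓ, ([] : Pos))) ∈ s ∧ L s ∈ posOf mo

/-- The nodes of the evaluation tree `ET_M(t)`. -/
inductive Node (pats : Set (Tm F)) (ar : F → ℕ) (L : St F → Pos) (t : Tm F) :
    St F → Pos → Prop
  | root : Node pats ar L t (initSt pats) []
  | step : ∀ s p f s' p', Node pats ar L t s p →
      (∃ v, subtermAt t (p ++ L s) = some v ∧ hd v = some f) →
      (s', p') ∈ delta pats ar L s f →
      Node pats ar L t s' (p ++ p')

/-- The edges of the evaluation tree `ET_M(t)`. -/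
def EdgeRel (pats : Set (Tm F)) (ar : F → ℕ) (L : St F → Pos) (t : Tm F)
    (s : St F) (p : Pos) (s' : St F) (q : Pos) : Prop :=
  Node pats ar L t s p ∧ ∃ f p',
    (∃ v, subtermAt t (p ++ L s) = some v ∧ hd v = some f) ∧
    (s', p') ∈ delta pats ar L s f ∧ q = p ++ p'

/-- The work set `W(s,p)`: the positions of `t` below the position pointer that
still have to be inspected. -/
def Work (t : Tm F) (s : St F) (p : Pos) : Set Pos :=
  {x | ∃ q, x = p ++ q ∧ x ∈ Dom t ∧ ∃ r ∈ posMO s, below q r}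

/-- The output function: match announcements whose obligation is completed by
observing `f` at the label position. -/
def outS (ar : F → ℕ) (L : St F → Pos) (s : St F) (f : F) : Set (Tm F × Pos) :=
  {ma | ({(Tm.app f (List.replicate (ar f) Tm.var), L s)}, ma) ∈ s}

/-!
Every node `(s, p)` of the evaluation tree satisfies an invariant: the obligation positions
of `s`, shifted by `p`, are positions of `t`; they form an antichain for the prefix order;
each carries the fresh goal of every pattern; and each lies below the announcement position
of its goal. Under this invariant the work set `W(s, p)` is the disjoint union of
`{p.L(s)}` and the work sets of the children: observing the symbol at `L(s)` replaces that
obligation position by its argument positions, and distinct children come from distinct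
dependency classes, which share no obligation position. Induction on `|W(s, p)|` then shows
that `φ` maps the subtree below `(s, p)` bijectively onto `W(s, p)`, and at the root
`W = D(t)`.
-/

lemma below_iff_prefix {p q : Pos} : below p q ↔ q <+: p :=
  ⟨fun ⟨r, h⟩ => ⟨r, h.symm⟩, fun ⟨r, h⟩ => ⟨r, h.symm⟩⟩

lemma subtermAt_nil (t : Tm F) : subtermAt t [] = some t := by cases t <;> rfl

lemma subtermAt_append (t : Tm F) (p q : Pos) :
    subtermAt t (p ++ q) = (subtermAt t p).bind (subtermAt · q) := by
  induction p generalizing t with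
  | nil => simp [subtermAt_nil]
  | cons i p ih =>
    cases t with
    | var => simp [subtermAt]
    | app f ts => simp only [List.cons_append, subtermAt, ih, Option.bind_assoc]

lemma mem_Dom_iff {t : Tm F} {p : Pos} : p ∈ Dom t ↔ ∃ u, subtermAt t p = some u :=
  Option.isSome_iff_exists

lemma nil_mem_Dom (t : Tm F) : [] ∈ Dom t := mem_Dom_iff.2 ⟨t, subtermAt_nil t⟩

lemma mem_Dom_of_append_mem_Dom {t : Tm F} {p q : Pos} (h : p ++ q ∈ Dom t) : p ∈ Dom t := by
  obtain ⟨u, hu⟩ := mem_Dom_iff.1 h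
  rw [subtermAt_append, Option.bind_eq_some_iff] at hu
  obtain ⟨v, hv, -⟩ := hu
  exact mem_Dom_iff.2 ⟨v, hv⟩

lemma append_singleton_mem_Dom_iff {t : Tm F} {p : Pos} {f : F} {ts : List (Tm F)}
    (h : subtermAt t p = some (Tm.app f ts)) {i : ℕ+} :
    p ++ [i] ∈ Dom t ↔ (i : ℕ) ≤ ts.length := by
  have := i.pos
  simp only [mem_Dom_iff, subtermAt_append, h, Option.bind_some, subtermAt,
    Option.bind_eq_some_iff, Option.some.injEq, exists_eq_right, List.getElem?_eq_some_iff]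
  constructor
  · rintro ⟨_, hi, -⟩; omega
  · intro hi; exact ⟨ts[(i : ℕ) - 1], by omega, rfl⟩

lemma WF.of_subtermAt {ar : F → ℕ} {t u : Tm F} (ht : WF ar t) :
    ∀ {p : Pos}, subtermAt t p = some u → WF ar u
  | [], h => by rw [subtermAt_nil] at h; cases h; exact ht
  | i :: p, h => by
    cases ht with
    | var => simp [subtermAt] at h
    | app f ts _ hts =>
      obtain ⟨v, hv, h⟩ := Option.bind_eq_some_iff.1 h
      exact (hts v (List.mem_of_getElem? hv)).of_subtermAt h

lemma WF.subtermAt_eq_app {ar : F → ℕ} {t v : Tm F} {p : Pos} {f : F} (ht : WF ar t)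
    (hv : subtermAt t p = some v) (hf : hd v = some f) :
    ∃ ts, subtermAt t p = some (Tm.app f ts) ∧ ts.length = ar f := by
  cases hwv : ht.of_subtermAt hv with
  | var => simp [hd] at hf
  | app g ts hlen _ =>
    obtain rfl : g = f := by simpa [hd] using hf
    exact ⟨ts, hv, hlen⟩

lemma Closed.subtermAt_eq_app {ar : F → ℕ} {t : Tm F} {p : Pos} (hc : Closed t)
    (hw : WF ar t) (hp : p ∈ Dom t) :
    ∃ f ts, subtermAt t p = some (Tm.app f ts) ∧ ts.length = ar f := by
  obtain ⟨v, hv⟩ := mem_Dom_iff.1 hp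
  cases v with
  | var => exact absurd rfl (hc p _ hv)
  | app f _ => exact ⟨f, hw.subtermAt_eq_app hv rfl⟩

theorem finite_Dom : ∀ t : Tm F, (Dom t).Finite
  | .var => (Set.finite_singleton []).subset fun p hp => by
      cases p with
      | nil => rfl
      | cons => simp [Dom, subtermAt] at hp
  | .app f ts => by
    have hsub : Dom (Tm.app f ts) ⊆
        insert [] (⋃ i : Fin ts.length, (List.cons ⟨i + 1, i.succ_pos⟩) '' Dom ts[i]) := by
      rintro (_ | ⟨i, q⟩) hq
      · exact Set.mem_insert _ _
      obtain ⟨u, hu⟩ := mem_Dom_iff.1 hq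
      obtain ⟨v, hv, hu⟩ := Option.bind_eq_some_iff.1 hu
      obtain ⟨hi, rfl⟩ := List.getElem?_eq_some_iff.1 hv
      refine Set.mem_insert_of_mem _ (Set.mem_iUnion.2 ⟨⟨_, hi⟩, q, mem_Dom_iff.2 ⟨u, hu⟩, ?_⟩)
      congr 1
      exact PNat.eq (Nat.sub_add_cancel i.pos)
    exact (Set.finite_iUnion fun i => (finite_Dom ts[i]).image _).insert [] |>.subset hsub
decreasing_by
  have := List.sizeOf_lt_of_mem (List.getElem_mem (l := ts) i.isLt)
  simp only [Tm.app.sizeOf_spec, Fin.getElem_fin]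
  omega

def argPos (lab : Pos) (n : ℕ) : Set Pos := {q | ∃ i : ℕ+, (i : ℕ) ≤ n ∧ q = lab ++ [i]}

lemma IsGcp.unique {P : Set Pos} {g₁ g₂ : Pos} (h₁ : IsGcp P g₁) (h₂ : IsGcp P g₂) :
    g₁ = g₂ := by
  have h₁₂ := below_iff_prefix.1 (h₂.2 g₁ h₁.1)
  exact h₁₂.eq_of_length (h₁₂.length_le.antisymm (below_iff_prefix.1 (h₁.2 g₂ h₂.1)).length_le)

theorem exists_isGcp {P : Set Pos} (hP : P.Nonempty) : ∃ g, IsGcp P g := by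
  classical
  obtain ⟨p₀, hp₀⟩ := hP
  let common (k : ℕ) : Prop := ∀ p ∈ P, p₀.take k <+: p
  refine ⟨p₀.take (Nat.findGreatest common p₀.length), fun p hp => below_iff_prefix.2 <|
    Nat.findGreatest_spec (P := common) (Nat.zero_le _) (by simp [common]) p hp, fun r hr => ?_⟩
  have hr₀ : r <+: p₀ := below_iff_prefix.1 (hr p₀ hp₀)
  have hr_eq : r = p₀.take r.length := List.prefix_iff_eq_take.1 hr₀
  have hr_common : common r.length := fun p hp => hr_eq ▸ below_iff_prefix.1 (hr p hp)
  rw [below_iff_prefix, hr_eq]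
  exact List.take_prefix_take_left (Nat.le_findGreatest hr₀.length_le hr_common)

lemma IsAntichain.diff_union_argPos {A : Set Pos} {lab : Pos}
    (hA : IsAntichain (· <+: ·) A) (hlab : lab ∈ A) (n : ℕ) :
    IsAntichain (· <+: ·) (A \ {lab} ∪ argPos lab n) := by
  rintro a (⟨ha, ha_ne⟩ | ⟨i, -, rfl⟩) b (⟨hb, hb_ne⟩ | ⟨j, -, rfl⟩) hne hab
  · exact hA ha hb hne hab
  · rcases List.prefix_concat_iff.1 hab with rfl | hab
    · exact hA hlab ha (Ne.symm ha_ne) (List.prefix_append _ _)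
    · exact ha_ne (hA.eq ha hlab hab)
  · exact hA hlab hb (Ne.symm hb_ne) ((List.prefix_append _ _).trans hab)
  · simp_all [List.prefix_append_right_inj]

section Automaton

def freshGoal (ℓ : Tm F) (q : Pos) : Goal F := ({(ℓ, q)}, (ℓ, q))

def FreshClosed (pats : Set (Tm F)) (s : St F) : Prop :=
  ∀ q ∈ posMO s, ∀ ℓ ∈ pats, freshGoal ℓ q ∈ s

def Anchored (s : St F) : Prop := ∀ mo ℓ pa, (mo, (ℓ, pa)) ∈ s → ∀ q ∈ posOf mo, pa <+: q

lemma posOf_singleton (ℓ : Tm F) (q : Pos) : posOf ({(ℓ, q)} : Obl F) = {q} := by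
  ext r
  simp [posOf]

lemma mem_posMO_of_mem {s : St F} {g : Goal F} {q : Pos} (hg : g ∈ s) (hq : q ∈ posOf g.1) :
    q ∈ posMO s :=
  ⟨g, hg, hq⟩

lemma posMO_mono {s s' : St F} (h : s ⊆ s') : posMO s ⊆ posMO s' :=
  fun _ ⟨g, hg, hq⟩ => ⟨g, h hg, hq⟩

variable {X K K₁ K₂ : St F}

lemma IsClass.subset (hK : IsClass X K) : K ⊆ X := by
  obtain ⟨g, -, rfl⟩ := hK
  exact fun _ h => h.1

lemma IsClass.mem_of_dirDep (hK : IsClass X K) {g g' : Goal F} (hg : g ∈ K) (hg' : g' ∈ X)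
    (h : dirDep g g') : g' ∈ K := by
  obtain ⟨a, -, rfl⟩ := hK
  exact ⟨hg', hg.2.tail ⟨hg.1, hg', h⟩⟩

lemma exists_isClass_mem {g : Goal F} (hg : g ∈ X) : ∃ K, IsClass X K ∧ g ∈ K :=
  ⟨_, ⟨g, hg, rfl⟩, hg, .refl⟩

lemma IsClass.eq_of_mem (h₁ : IsClass X K₁) (h₂ : IsClass X K₂) {g : Goal F} (hg₁ : g ∈ K₁)
    (hg₂ : g ∈ K₂) : K₁ = K₂ := by
  have : Std.Symm fun a b : Goal F => a ∈ X ∧ b ∈ X ∧ dirDep a b :=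
    ⟨fun _ _ ⟨ha, hb, q, hq⟩ => ⟨hb, ha, q, hq.symm⟩⟩
  obtain ⟨a, -, rfl⟩ := h₁
  obtain ⟨b, -, rfl⟩ := h₂
  ext g'
  exact and_congr_right fun _ =>
    ⟨(hg₂.2.trans (Std.Symm.symm _ _ hg₁.2)).trans, (hg₁.2.trans (Std.Symm.symm _ _ hg₂.2)).trans⟩

lemma IsClass.eq_of_mem_posMO (h₁ : IsClass X K₁) (h₂ : IsClass X K₂) {q : Pos}
    (hq₁ : q ∈ posMO K₁) (hq₂ : q ∈ posMO K₂) : K₁ = K₂ := by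
  obtain ⟨g₁, hg₁, hq₁⟩ := hq₁
  obtain ⟨g₂, hg₂, hq₂⟩ := hq₂
  exact h₁.eq_of_mem h₂ (h₁.mem_of_dirDep hg₁ (h₂.subset hg₂) ⟨q, hq₁, hq₂⟩) hg₂

lemma Anchored.prefix_of_isGcp (hX : Anchored X) (hK : IsClass X K) {g : Pos}
    (hg : IsGcp (posMA K) g) : ∀ q ∈ posMO K, g <+: q := by
  rintro q ⟨⟨mo, ℓ, pa⟩, hK', hq⟩
  exact (below_iff_prefix.1 (hg.1 pa ⟨mo, ℓ, hK'⟩)).trans (hX mo ℓ pa (hK.subset hK') q hq)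

variable {pats : Set (Tm F)} {ar : F → ℕ} {s : St F} {lab : Pos} {f : F}

lemma posOf_reduce_subset (mo : Obl F) (n : ℕ) :
    posOf (reduce mo n lab) ⊆ posOf mo \ {lab} ∪ argPos lab n := by
  rintro q ⟨u, ⟨hmo, hne⟩ | ⟨_, _, i, -, hi, -, -, hq⟩⟩
  · exact Or.inl ⟨⟨u, hmo⟩, hne⟩
  · exact Or.inr ⟨i, hi, (Prod.ext_iff.1 hq).2⟩

lemma posMO_derivS_subset :
    posMO (derivS pats ar s lab f) ⊆ posMO s \ {lab} ∪ argPos lab (ar f) := by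
  rintro q ⟨g, hg, hq⟩
  rcases hg with (⟨hg, hlab⟩ | ⟨mo, ma, hs, -, -, rfl⟩) | ⟨ℓ, i, -, hi, rfl⟩
  · exact Or.inl ⟨⟨g, hg, hq⟩, fun h => hlab (h ▸ hq)⟩
  · rcases posOf_reduce_subset mo (ar f) hq with ⟨hq, hne⟩ | hq
    · exact Or.inl ⟨⟨_, hs, hq⟩, hne⟩
    · exact Or.inr hq
  · simp only [posOf_singleton, Set.mem_singleton_iff] at hq
    exact Or.inr ⟨i, hi, hq⟩

lemma FreshClosed.freshGoal_mem_derivS (hs : FreshClosed pats s) {q : Pos}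
    (hq : q ∈ posMO s \ {lab} ∪ argPos lab (ar f)) {ℓ : Tm F} (hℓ : ℓ ∈ pats) :
    freshGoal ℓ q ∈ derivS pats ar s lab f := by
  rcases hq with ⟨hq, hne⟩ | ⟨i, hi, rfl⟩
  · refine Or.inl (Or.inl ⟨hs q hq ℓ hℓ, ?_⟩)
    simpa [freshGoal, posOf_singleton] using Ne.symm hne
  · exact Or.inr ⟨ℓ, i, hℓ, hi, rfl⟩

lemma FreshClosed.posMO_derivS (hs : FreshClosed pats s) (hpats : pats.Nonempty) :
    posMO (derivS pats ar s lab f) = posMO s \ {lab} ∪ argPos lab (ar f) := by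
  refine posMO_derivS_subset.antisymm fun q hq => ?_
  obtain ⟨ℓ, hℓ⟩ := hpats
  exact mem_posMO_of_mem (hs.freshGoal_mem_derivS hq hℓ) (by simp [freshGoal, posOf_singleton])

lemma FreshClosed.derivS (hs : FreshClosed pats s) : FreshClosed pats (derivS pats ar s lab f) :=
  fun _ hq _ hℓ => hs.freshGoal_mem_derivS (posMO_derivS_subset hq) hℓ

lemma IsAntichain.posMO_derivS (hs : IsAntichain (· <+: ·) (posMO s)) (hlab : lab ∈ posMO s) :
    IsAntichain (· <+: ·) (posMO (derivS pats ar s lab f)) :=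
  (hs.diff_union_argPos hlab _).subset posMO_derivS_subset

lemma Anchored.derivS (hs : Anchored s) : Anchored (derivS pats ar s lab f) := by
  intro mo ℓ pa hg q hq
  rcases hg with (⟨hg, -⟩ | ⟨mo₀, ma₀, hs₀, ⟨ℓ₀, hlab, -⟩, -, heq⟩) | ⟨ℓ₀, i, -, -, heq⟩
  · exact hs mo ℓ pa hg q hq
  · simp only [Prod.mk.injEq] at heq
    obtain ⟨rfl, rfl⟩ := heq
    rcases posOf_reduce_subset mo₀ _ hq with ⟨hq, -⟩ | ⟨i, -, rfl⟩
    · exact hs _ _ _ hs₀ q hq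
    · exact (hs _ _ _ hs₀ lab ⟨ℓ₀, hlab⟩).trans (List.prefix_append _ _)
  · simp only [Prod.mk.injEq] at heq
    obtain ⟨rfl, -, rfl⟩ := heq
    simp only [posOf_singleton, Set.mem_singleton_iff] at hq
    exact hq ▸ List.prefix_rfl

end Automaton

lemma posOf_liftGoal (g : Pos) (x : Goal F) :
    posOf (liftGoal g x).1 = List.drop g.length '' posOf x.1 := by
  ext q
  constructor
  · rintro ⟨u, y, hy, hyq⟩
    exact ⟨y.2, ⟨y.1, hy⟩, (Prod.ext_iff.1 hyq).2⟩
  · rintro ⟨r, ⟨u, hu⟩, rfl⟩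
    exact ⟨u, (u, r), hu, rfl⟩

lemma posMO_liftSt (g : Pos) (K : St F) : posMO (liftSt g K) = List.drop g.length '' posMO K := by
  ext q
  constructor
  · rintro ⟨_, ⟨x, hx, rfl⟩, hq⟩
    obtain ⟨r, hr, rfl⟩ := (posOf_liftGoal g x).le hq
    exact ⟨r, ⟨x, hx, hr⟩, rfl⟩
  · rintro ⟨r, ⟨x, hx, hr⟩, rfl⟩
    exact ⟨liftGoal g x, ⟨x, hx, rfl⟩, (posOf_liftGoal g x).ge ⟨r, hr, rfl⟩⟩

lemma mem_posMO_liftSt {g : Pos} {K : St F} (hpre : ∀ q ∈ posMO K, g <+: q) {q : Pos} :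
    q ∈ posMO (liftSt g K) ↔ g ++ q ∈ posMO K := by
  rw [posMO_liftSt]
  constructor
  · rintro ⟨r, hr, rfl⟩
    obtain ⟨w, rfl⟩ := hpre r hr
    simpa using hr
  · exact fun h => ⟨_, h, List.drop_left⟩

lemma liftGoal_freshGoal (g : Pos) (ℓ : Tm F) (q : Pos) :
    liftGoal g (freshGoal ℓ (g ++ q)) = freshGoal ℓ q := by
  simp [liftGoal, freshGoal]

section Invariant

variable {pats : Set (Tm F)} {ar : F → ℕ} {t : Tm F}

structure Invariant (pats : Set (Tm F)) (t : Tm F) (s : St F) (p : Pos) : Prop where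
  mem_Dom : ∀ q ∈ posMO s, p ++ q ∈ Dom t
  freshClosed : FreshClosed pats s
  antichain : IsAntichain (· <+: ·) (posMO s)
  anchored : Anchored s

lemma invariant_initSt : Invariant pats t (initSt pats) [] := by
  have hpos : posMO (initSt pats) ⊆ {[]} := by
    rintro q ⟨_, ⟨ℓ, -, rfl⟩, hq⟩
    simpa [posOf_singleton] using hq
  refine ⟨fun q hq => ?_, fun q hq ℓ hℓ => ?_,
    (Set.subsingleton_singleton.anti hpos).isAntichain _, fun _ _ pa hg _ _ => ?_⟩
  · rw [hpos hq]; exact nil_mem_Dom t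
  · rw [hpos hq]; exact ⟨ℓ, hℓ, rfl⟩
  · obtain ⟨ℓ, -, hg⟩ := hg
    obtain ⟨-, -, rfl⟩ := Prod.ext_iff.1 hg
    exact List.nil_prefix

lemma Invariant.deriv {s : St F} {p lab : Pos} {f : F} {ts : List (Tm F)}
    (h : Invariant pats t s p) (hlab : lab ∈ posMO s)
    (hts : subtermAt t (p ++ lab) = some (Tm.app f ts)) (hlen : ts.length = ar f) :
    Invariant pats t (derivS pats ar s lab f) p where
  mem_Dom q hq := by
    rcases posMO_derivS_subset hq with ⟨hq, -⟩ | ⟨i, hi, rfl⟩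
    · exact h.mem_Dom q hq
    · rw [← List.append_assoc, append_singleton_mem_Dom_iff hts]
      omega
  freshClosed := h.freshClosed.derivS
  antichain := h.antichain.posMO_derivS hlab
  anchored := h.anchored.derivS

lemma Invariant.lift {X K : St F} {p g : Pos} (h : Invariant pats t X p) (hK : IsClass X K)
    (hg : IsGcp (posMA K) g) : Invariant pats t (liftSt g K) (p ++ g) := by
  have hpre := h.anchored.prefix_of_isGcp hK hg
  have hKX : posMO K ⊆ posMO X := posMO_mono hK.subset
  refine ⟨fun q hq => ?_, fun q hq ℓ hℓ => ?_, fun q₁ hq₁ q₂ hq₂ hne hpq => ?_, ?_⟩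
  · rw [List.append_assoc]
    exact h.mem_Dom _ (hKX ((mem_posMO_liftSt hpre).1 hq))
  · have hq' := (mem_posMO_liftSt hpre).1 hq
    have hqX := hKX hq'
    obtain ⟨x, hxK, hxq⟩ := hq'
    have hfresh : freshGoal ℓ (g ++ q) ∈ K :=
      hK.mem_of_dirDep hxK (h.freshClosed _ hqX ℓ hℓ)
        ⟨g ++ q, hxq, by simp [freshGoal, posOf_singleton]⟩
    exact ⟨_, hfresh, liftGoal_freshGoal g ℓ q⟩
  · rw [mem_posMO_liftSt hpre] at hq₁ hq₂
    exact h.antichain (hKX hq₁) (hKX hq₂) (by simpa using hne)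
      ((List.prefix_append_right_inj g).2 hpq)
  · rintro mo ℓ pa ⟨⟨mo₀, ℓ₀, pa₀⟩, hxK, hx⟩ q hq
    simp only [liftGoal, Prod.mk.injEq] at hx
    obtain ⟨rfl, -, rfl⟩ := hx
    obtain ⟨r, hr, rfl⟩ := (posOf_liftGoal g (mo₀, ℓ₀, pa₀)).le hq
    exact (h.anchored _ _ _ (hK.subset hxK) r hr).drop _

end Invariant

section WorkSet

variable {pats : Set (Tm F)} {ar : F → ℕ} {L : St F → Pos} {t : Tm F}
  {s : St F} {p : Pos} {f : F}

lemma mem_delta_iff {s' : St F} {p' : Pos} :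
    (s', p') ∈ delta pats ar L s f ↔
      ∃ K, IsClass (derivS pats ar s (L s) f) K ∧ IsGcp (posMA K) p' ∧ s' = liftSt p' K :=
  Iff.rfl

lemma mem_Work_iff {x : Pos} : x ∈ Work t s p ↔ x ∈ Dom t ∧ ∃ r ∈ posMO s, p ++ r <+: x := by
  constructor
  · rintro ⟨q, rfl, hx, r, hr, hrq⟩
    exact ⟨hx, r, hr, (List.prefix_append_right_inj p).2 (below_iff_prefix.1 hrq)⟩
  · rintro ⟨hx, r, hr, w, rfl⟩
    exact ⟨r ++ w, List.append_assoc .., hx, r, hr, w, rfl⟩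

lemma mem_Work_liftSt {X K : St F} {g : Pos} (hX : Anchored X) (hK : IsClass X K)
    (hg : IsGcp (posMA K) g) {x : Pos} :
    x ∈ Work t (liftSt g K) (p ++ g) ↔ x ∈ Dom t ∧ ∃ r ∈ posMO K, p ++ r <+: x := by
  have hpre := hX.prefix_of_isGcp hK hg
  rw [mem_Work_iff]
  refine and_congr_right fun _ => ⟨?_, ?_⟩
  · rintro ⟨r, hr, hrx⟩
    exact ⟨g ++ r, (mem_posMO_liftSt hpre).1 hr, by simpa using hrx⟩
  · rintro ⟨r, hr, hrx⟩
    obtain ⟨w, rfl⟩ := hpre r hr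
    exact ⟨w, (mem_posMO_liftSt hpre).2 hr, by simpa using hrx⟩

lemma Invariant.Work_delta_subset (h : Invariant pats t s p) (hlab : L s ∈ posMO s)
    {s' : St F} {p' : Pos} (hδ : (s', p') ∈ delta pats ar L s f) :
    Work t s' (p ++ p') ⊆ Work t s p \ {p ++ L s} := by
  obtain ⟨K, hK, hg, rfl⟩ := mem_delta_iff.1 hδ
  intro x hx
  obtain ⟨hxD, r, hr, hrx⟩ := (mem_Work_liftSt h.anchored.derivS hK hg).1 hx
  rcases posMO_derivS_subset (posMO_mono hK.subset hr) with ⟨hr, hne⟩ | ⟨i, -, rfl⟩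
  · refine ⟨mem_Work_iff.2 ⟨hxD, r, hr, hrx⟩, fun hx => hne (h.antichain.eq hr hlab ?_)⟩
    exact (List.prefix_append_right_inj p).1 (hx ▸ hrx)
  · have hlab_r : p ++ L s <+: p ++ (L s ++ [i]) := by
      rw [← List.append_assoc]
      exact List.prefix_append _ _
    refine ⟨mem_Work_iff.2 ⟨hxD, L s, hlab, hlab_r.trans hrx⟩, fun hx => ?_⟩
    have := (hx ▸ hrx).length_le
    simp at this

lemma Invariant.disjoint_Work_delta (h : Invariant pats t s p) (hlab : L s ∈ posMO s)
    {s₁ s₂ : St F} {p₁ p₂ : Pos} (h₁ : (s₁, p₁) ∈ delta pats ar L s f)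
    (h₂ : (s₂, p₂) ∈ delta pats ar L s f) (hne : (s₁, p₁) ≠ (s₂, p₂)) :
    Disjoint (Work t s₁ (p ++ p₁)) (Work t s₂ (p ++ p₂)) := by
  obtain ⟨K₁, hK₁, hg₁, rfl⟩ := mem_delta_iff.1 h₁
  obtain ⟨K₂, hK₂, hg₂, rfl⟩ := mem_delta_iff.1 h₂
  have hA := h.antichain.posMO_derivS (pats := pats) (ar := ar) (f := f) hlab
  refine Set.disjoint_left.2 fun x hx₁ hx₂ => hne ?_
  obtain ⟨-, r₁, hr₁, hrx₁⟩ := (mem_Work_liftSt h.anchored.derivS hK₁ hg₁).1 hx₁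
  obtain ⟨-, r₂, hr₂, hrx₂⟩ := (mem_Work_liftSt h.anchored.derivS hK₂ hg₂).1 hx₂
  have hr₁X := posMO_mono hK₁.subset hr₁
  have hr₂X := posMO_mono hK₂.subset hr₂
  obtain rfl : r₁ = r₂ := by
    rcases List.prefix_or_prefix_of_prefix hrx₁ hrx₂ with h₁₂ | h₂₁
    · exact hA.eq hr₁X hr₂X ((List.prefix_append_right_inj p).1 h₁₂)
    · exact (hA.eq hr₂X hr₁X ((List.prefix_append_right_inj p).1 h₂₁)).symm
  obtain rfl := hK₁.eq_of_mem_posMO hK₂ hr₁ hr₂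
  rw [hg₁.unique hg₂]

lemma Invariant.exists_delta_mem_Work (h : Invariant pats t s p) (hpats : pats.Nonempty)
    {ts : List (Tm F)} (hts : subtermAt t (p ++ L s) = some (Tm.app f ts))
    (hlen : ts.length = ar f) {x : Pos} (hx : x ∈ Work t s p) (hne : x ≠ p ++ L s) :
    ∃ s' p', (s', p') ∈ delta pats ar L s f ∧ x ∈ Work t s' (p ++ p') := by
  obtain ⟨hxD, r, hr, hrx⟩ := mem_Work_iff.1 hx
  have hX : ∃ r' ∈ posMO (derivS pats ar s (L s) f), p ++ r' <+: x := by
    rw [h.freshClosed.posMO_derivS hpats]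
    by_cases hr_lab : r = L s
    · subst hr_lab
      obtain ⟨_ | ⟨i, w⟩, rfl⟩ := hrx
      · simp at hne
      have hi : p ++ L s ++ [i] ∈ Dom t :=
        mem_Dom_of_append_mem_Dom (q := w) (by simpa using hxD)
      rw [append_singleton_mem_Dom_iff hts] at hi
      exact ⟨L s ++ [i], Or.inr ⟨i, hlen ▸ hi, rfl⟩, w, by simp⟩
    · exact ⟨r, Or.inl ⟨hr, hr_lab⟩, hrx⟩
  obtain ⟨r', ⟨y, hy, hr'⟩, hr'x⟩ := hX
  obtain ⟨K, hK, hyK⟩ := exists_isClass_mem hy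
  obtain ⟨g, hg⟩ := exists_isGcp (P := posMA K) ⟨y.2.2, y.1, y.2.1, hyK⟩
  exact ⟨_, g, ⟨K, hK, hg, rfl⟩,
    (mem_Work_liftSt h.anchored.derivS hK hg).2 ⟨hxD, r', ⟨y, hyK, hr'⟩, hr'x⟩⟩

end WorkSet

section EvalTree

variable {pats : Set (Tm F)} {ar : F → ℕ} {L : St F → Pos} {t : Tm F}

def inspected (L : St F → Pos) (n : St F × Pos) : Pos := n.2 ++ L n.1

def treeEdge (pats : Set (Tm F)) (ar : F → ℕ) (L : St F → Pos) (t : Tm F)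
    (n m : St F × Pos) : Prop :=
  EdgeRel pats ar L t n.1 n.2 m.1 m.2

local notation "Desc" => Relation.ReflTransGen (treeEdge pats ar L t)

lemma node_of_treeEdge {n m : St F × Pos} (h : treeEdge pats ar L t n m) :
    Node pats ar L t m.1 m.2 := by
  obtain ⟨hn, f, p', hv, hδ, hm⟩ := h
  exact hm ▸ Node.step _ _ _ _ _ hn hv hδ

lemma node_iff_reflTransGen {s : St F} {p : Pos} :
    Node pats ar L t s p ↔ Desc (initSt pats, []) (s, p) := by
  constructor
  · intro h
    induction h with
    | root => exact .refl
    | step s p f s' p' hn hv hδ ih => exact ih.tail ⟨hn, f, p', hv, hδ, rfl⟩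
  · intro h
    cases h with
    | refl => exact .root
    | tail _ he => exact node_of_treeEdge he

lemma Node.reachable {s : St F} {p : Pos} (h : Node pats ar L t s p) : Reachable pats ar L s := by
  induction h with
  | root => exact .init
  | step s p f s' p' _ _ hδ ih => exact .step s f s' p' ih hδ

lemma RootLabel.label_mem (hL : RootLabel pats ar L) {s : St F} {p : Pos}
    (h : Node pats ar L t s p) : L s ∈ posMO s := by
  obtain ⟨mo, ℓ, hmem, hlab⟩ := hL s h.reachable
  exact ⟨_, hmem, hlab⟩

lemma RootLabel.nonempty (hL : RootLabel pats ar L) : pats.Nonempty := by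
  obtain ⟨_, _, ⟨ℓ, hℓ, -⟩, -⟩ := hL _ .init
  exact ⟨ℓ, hℓ⟩

lemma Node.invariant (hw : WF ar t) (hL : RootLabel pats ar L) {s : St F} {p : Pos}
    (h : Node pats ar L t s p) : Invariant pats t s p := by
  induction h with
  | root => exact invariant_initSt
  | step s p f s' p' hn hv hδ ih =>
    obtain ⟨v, hv, hf⟩ := hv
    obtain ⟨ts, hts, hlen⟩ := hw.subtermAt_eq_app hv hf
    obtain ⟨K, hK, hg, rfl⟩ := mem_delta_iff.1 hδ
    exact (ih.deriv (hL.label_mem hn) hts hlen).lift hK hg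

lemma Work_initSt (hpats : pats.Nonempty) : Work t (initSt pats) [] = Dom t := by
  obtain ⟨ℓ, hℓ⟩ := hpats
  ext x
  refine mem_Work_iff.trans ⟨And.left, fun hx => ⟨hx, [], ?_, List.nil_prefix⟩⟩
  exact mem_posMO_of_mem (g := freshGoal ℓ []) ⟨ℓ, hℓ, rfl⟩ (by simp [freshGoal, posOf_singleton])

lemma inspected_mem_Work (hw : WF ar t) (hL : RootLabel pats ar L)
    {n : St F × Pos} (hn : Node pats ar L t n.1 n.2) : inspected L n ∈ Work t n.1 n.2 :=
  mem_Work_iff.2 ⟨(hn.invariant hw hL).mem_Dom _ (hL.label_mem hn), L n.1, hL.label_mem hn,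
    List.prefix_rfl⟩

lemma Work_subset_of_treeEdge (hw : WF ar t) (hL : RootLabel pats ar L)
    {n m : St F × Pos} (h : treeEdge pats ar L t n m) :
    Work t m.1 m.2 ⊆ Work t n.1 n.2 \ {inspected L n} := by
  obtain ⟨hn, f, p', -, hδ, hm⟩ := h
  rw [hm]
  exact (hn.invariant hw hL).Work_delta_subset (hL.label_mem hn) hδ

lemma disjoint_Work_of_treeEdge (hw : WF ar t) (hL : RootLabel pats ar L)
    {n m₁ m₂ : St F × Pos} (h₁ : treeEdge pats ar L t n m₁)
    (h₂ : treeEdge pats ar L t n m₂) (hne : m₁ ≠ m₂) :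
    Disjoint (Work t m₁.1 m₁.2) (Work t m₂.1 m₂.2) := by
  obtain ⟨hn, f₁, p₁, ⟨v₁, hv₁, hf₁⟩, hδ₁, hm₁⟩ := h₁
  obtain ⟨-, f₂, p₂, ⟨v₂, hv₂, hf₂⟩, hδ₂, hm₂⟩ := h₂
  obtain rfl : f₁ = f₂ := by
    rw [hv₁, Option.some_inj] at hv₂
    rw [← Option.some_inj, ← hf₁, ← hf₂, hv₂]
  obtain ⟨s₁, q₁⟩ := m₁
  obtain ⟨s₂, q₂⟩ := m₂
  dsimp only at hm₁ hm₂ hδ₁ hδ₂ ⊢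
  subst hm₁ hm₂
  refine (hn.invariant hw hL).disjoint_Work_delta (hL.label_mem hn) hδ₁ hδ₂ fun h => hne ?_
  obtain ⟨rfl, rfl⟩ := Prod.mk.inj h
  rfl

lemma exists_treeEdge_mem_Work (hc : Closed t) (hw : WF ar t) (hL : RootLabel pats ar L)
    {n : St F × Pos} (hn : Node pats ar L t n.1 n.2) {x : Pos} (hx : x ∈ Work t n.1 n.2)
    (hne : x ≠ inspected L n) : ∃ m, treeEdge pats ar L t n m ∧ x ∈ Work t m.1 m.2 := by
  have hinv := hn.invariant hw hL
  obtain ⟨f, ts, hts, hlen⟩ := hc.subtermAt_eq_app hw (hinv.mem_Dom _ (hL.label_mem hn))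
  obtain ⟨s', p', hδ, hx'⟩ := hinv.exists_delta_mem_Work hL.nonempty hts hlen hx hne
  exact ⟨(s', n.2 ++ p'), ⟨hn, f, p', ⟨_, hts, rfl⟩, hδ, rfl⟩, hx'⟩

lemma inspected_mem_Work_of_reflTransGen (hw : WF ar t) (hL : RootLabel pats ar L)
    {n m : St F × Pos} (hn : Node pats ar L t n.1 n.2) (h : Desc n m) :
    inspected L m ∈ Work t n.1 n.2 := by
  revert hn
  induction h using Relation.ReflTransGen.head_induction_on with
  | refl => exact inspected_mem_Work hw hL
  | head he _ ih =>
    exact fun _ => (Work_subset_of_treeEdge hw hL he (ih (node_of_treeEdge he))).1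

theorem bijOn_inspected_reflTransGen (hc : Closed t) (hw : WF ar t) (hL : RootLabel pats ar L)
    (n : St F × Pos) (hn : Node pats ar L t n.1 n.2) :
    Set.BijOn (inspected L) {m | Desc n m} (Work t n.1 n.2) := by
  have ih (m) (he : treeEdge pats ar L t n m) :
      Set.BijOn (inspected L) {m' | Desc m m'} (Work t m.1 m.2) :=
    bijOn_inspected_reflTransGen hc hw hL m (node_of_treeEdge he)
  have below_child {m m'} (he : treeEdge pats ar L t n m) (hm' : Desc m m') :
      inspected L m' ≠ inspected L n :=
    (Work_subset_of_treeEdge hw hL he ((ih m he).mapsTo hm')).2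
  refine ⟨fun m hm => inspected_mem_Work_of_reflTransGen hw hL hn hm, ?_, fun x hx => ?_⟩
  · intro m₁ hm₁ m₂ hm₂ heq
    rcases Relation.ReflTransGen.cases_head hm₁ with rfl | ⟨c₁, he₁, hc₁⟩ <;>
      rcases Relation.ReflTransGen.cases_head hm₂ with rfl | ⟨c₂, he₂, hc₂⟩
    · rfl
    · exact absurd heq.symm (below_child he₂ hc₂)
    · exact absurd heq (below_child he₁ hc₁)
    · obtain rfl : c₁ = c₂ := by
        by_contra hne
        exact Set.disjoint_left.1 (disjoint_Work_of_treeEdge hw hL he₁ he₂ hne)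
          ((ih c₁ he₁).mapsTo hc₁) (heq ▸ (ih c₂ he₂).mapsTo hc₂)
      exact (ih c₁ he₁).injOn hc₁ hc₂ heq
  · by_cases hxn : x = inspected L n
    · exact ⟨n, .refl, hxn.symm⟩
    · obtain ⟨m, he, hxm⟩ := exists_treeEdge_mem_Work hc hw hL hn hx hxn
      obtain ⟨m', hm', rfl⟩ := (ih m he).surjOn hxm
      exact ⟨m', .head he hm', rfl⟩
termination_by (Work t n.1 n.2).ncard
decreasing_by
  exact Set.ncard_lt_ncard ((Work_subset_of_treeEdge hw hL he).trans_ssubset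
    (Set.sdiff_singleton_ssubset.2 (inspected_mem_Work hw hL hn)))
    ((finite_Dom t).subset fun x hx => (mem_Work_iff.1 hx).1)

end EvalTree

theorem eval_tree_bijection_general {F : Type} (pats : Set (Tm F))
    (ar : F → ℕ) (L : St F → Pos) (t : Tm F) (hc : Closed t) (hw : WF ar t)
    (hL : RootLabel pats ar L) :
    Set.BijOn (fun n : St F × Pos => n.2 ++ L n.1)
      {n : St F × Pos | Node pats ar L t n.1 n.2} (Dom t) ∧
    {n : St F × Pos | Node pats ar L t n.1 n.2}.Finite := by
  have hnodes : {n : St F × Pos | Node pats ar L t n.1 n.2} =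
      {n | Relation.ReflTransGen (treeEdge pats ar L t) (initSt pats, []) n} :=
    Set.ext fun _ => node_iff_reflTransGen
  have hbij : Set.BijOn (inspected L) {n : St F × Pos | Node pats ar L t n.1 n.2} (Dom t) := by
    rw [hnodes, ← Work_initSt hL.nonempty]
    exact bijOn_inspected_reflTransGen hc hw hL _ .root
  exact ⟨hbij, .of_finite_image (hbij.image_eq ▸ finite_Dom t) hbij.injOn⟩

/-- The map `φ(s,p) = p.L(s)` is a bijection between the nodes of the
evaluation tree `ET_M(t)` and the positions of `t`; in particular the
evaluation tree is finite and every position of `t` is inspected exactly once. -/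
theorem eval_tree_bijection {F : Type} (pats : Set (Tm F))
    (ar : F → ℕ) (L : St F → Pos) (t : Tm F) (hc : Closed t) (hw : WF ar t)
    (hpats : pats.Nonempty) (hWF : ∀ ℓ ∈ pats, WF ar ℓ)
    (hpv : ∀ ℓ ∈ pats, ℓ ≠ Tm.var) (hL : RootLabel pats ar L) :
    Set.BijOn (fun n : St F × Pos => n.2 ++ L n.1)
      {n : St F × Pos | Node pats ar L t n.1 n.2} (Dom t) ∧
    {n : St F × Pos | Node pats ar L t n.1 n.2}.Finite :=
  eval_tree_bijection_general pats ar L t hc hw hL
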